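/- With the setup of nested FE spaces and prolongations P_k as above, define ū^L := 0 and ūᵏ := P_kᵀ(ū^{k+1} + (A^{k+1})ᵀ u^{k+1}), where (Aᵏ)_{ij} = a(φᵢᵏ, φⱼᵏ). Then for each k and each index j on level k, (Q_k A u^{>k})_j = ūᵏ_j, i.e., ūᵏ encodes the action of the stiffness operator applied to all finer-level contributions, tested against level-k basis functions. -/

import Mathlib

/-!
Write `u^{>k} = ∑_{ℓ > k} ∑ᵢ uᵢ^ℓ φᵢ^ℓ` and let `b_k(v) = (a(v, φⱼᵏ))ⱼ` be the load vector of `v`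
on level `k`. The refinement relation gives `b_k(v) = P_kᵀ b_{k+1}(v)`, and
`(A^{k+1})ᵀ u^{k+1} = b_{k+1}(∑ᵢ uᵢ^{k+1} φᵢ^{k+1})`. Since `u^{>k} = u^{>k+1} + ∑ᵢ uᵢ^{k+1} φᵢ^{k+1}`,
the recursion defining `ūᵏ` is exactly the one satisfied by `b_k(u^{>k})`, and both vanish at `k = L`.
-/

open Matrix Finset

section LoadVector

variable {R E ι κ : Type*} [CommSemiring R] [AddCommMonoid E] [Module R E]

def loadVector (a : E →ₗ[R] E →ₗ[R] R) (ψ : ι → E) (v : E) : ι → R := fun j => a v (ψ j)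

theorem loadVector_zero (a : E →ₗ[R] E →ₗ[R] R) (ψ : ι → E) : loadVector a ψ 0 = 0 := by
  ext j
  simp [loadVector]

theorem loadVector_add (a : E →ₗ[R] E →ₗ[R] R) (ψ : ι → E) (v w : E) :
    loadVector a ψ (v + w) = loadVector a ψ v + loadVector a ψ w := by
  ext j
  simp [loadVector]

theorem loadVector_of_refinement [Fintype κ] (a : E →ₗ[R] E →ₗ[R] R) {ψ : ι → E} {χ : κ → E}
    {P : Matrix κ ι R} (hψ : ∀ i, ψ i = ∑ j, P j i • χ j) (v : E) :
    loadVector a ψ v = Pᵀ *ᵥ loadVector a χ v := by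
  ext i
  simp [loadVector, hψ, mulVec, dotProduct, map_sum]

theorem stiffness_transpose_mulVec [Fintype κ] (a : E →ₗ[R] E →ₗ[R] R) (χ : κ → E) (c : κ → R) :
    (of fun i j => a (χ i) (χ j))ᵀ *ᵥ c = loadVector a χ (∑ i, c i • χ i) := by
  ext j
  simp [loadVector, mulVec, dotProduct, mul_comm]

end LoadVector

/-- Fine-grid accumulation (Lemma "Fine grid smoothing"): with the refinement relation
`φᵢᵏ = ∑ⱼ (P_kᵀ)_{i,j} φⱼ^{k+1}`, stiffness matrices `(Aᵏ)_{ij} = a(φᵢᵏ, φⱼᵏ)` and the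
downward recursion `ū^L = 0`, `ūᵏ = P_kᵀ(ū^{k+1} + (A^{k+1})ᵀ u^{k+1})`, the vector `ūᵏ`
encodes the stiffness action of all finer-level contributions tested against level-`k`
basis functions: `(Q_k A u^{>k})_j = ūᵏ_j`. -/
theorem fine_grid_accumulation {D : Type*} (L : ℕ) (n : ℕ → ℕ)
    (a : (D → ℝ) →ₗ[ℝ] (D → ℝ) →ₗ[ℝ] ℝ)
    (φ : (k : ℕ) → Fin (n k) → D → ℝ)
    (P : (k : ℕ) → Matrix (Fin (n (k + 1))) (Fin (n k)) ℝ)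
    (hP : ∀ k i, φ k i = fun x => ∑ j, P k j i * φ (k + 1) j x)
    (u : (k : ℕ) → Fin (n k) → ℝ)
    (ub : (k : ℕ) → Fin (n k) → ℝ)
    (hubL : ub L = 0)
    (hubs : ∀ k, k < L → ub k = (P k)ᵀ.mulVec (ub (k + 1) +
        (Matrix.of fun i j => a (φ (k + 1) i) (φ (k + 1) j))ᵀ.mulVec (u (k + 1)))) :
    ∀ k ≤ L, ∀ j : Fin (n k),
      (∑ ℓ ∈ Finset.Icc (k + 1) L, ∑ i, u ℓ i * a (φ ℓ i) (φ k j)) = ub k j := by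
  have hrefine (k : ℕ) (i : Fin (n k)) : φ k i = ∑ j, P k j i • φ (k + 1) j := by
    rw [hP]
    ext x
    simp [Finset.sum_apply]
  let fine (k : ℕ) : D → ℝ := ∑ ℓ ∈ Icc (k + 1) L, ∑ i, u ℓ i • φ ℓ i
  have fine_succ (k : ℕ) (hk : k < L) : fine k = fine (k + 1) + ∑ i, u (k + 1) i • φ (k + 1) i := by
    simp only [fine]
    rw [← insert_Icc_add_one_left_eq_Icc (show k + 1 ≤ L by omega), sum_insert (by simp), add_comm]
  have ub_eq_loadVector (k : ℕ) (hk : k ≤ L) : ub k = loadVector a (φ k) (fine k) := by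
    induction hk using Nat.decreasingInduction with
    | self => simp [fine, hubL, loadVector_zero]
    | of_succ k hk ih =>
      rw [hubs k hk, ih, stiffness_transpose_mulVec, ← loadVector_add, ← fine_succ k hk,
        loadVector_of_refinement a (hrefine k)]
  intro k hk j
  simp [ub_eq_loadVector k hk, loadVector, fine, map_sum]
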